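/- arXiv:2409.18510 — 4 statements merged into one kernel-verified Lean document; each statement's English description precedes it below -/
import Mathlib

section
/- Let G be a finite r-regular simple graph and k ≥ 1. Then the k-rainbow domination number satisfies γ_{rk}(G) ≥ (k/(r+k))·|V(G)|. -/
open SimpleGraph Finset

/-- `f` is a `k`-rainbow dominating function of `G`: every vertex with empty label
sees all `k` colors in its open neighborhood. -/
def IsRainbowDominating {V : Type*} (G : SimpleGraph V) (k : ℕ)
    (f : V → Finset (Fin k)) : Prop :=
  ∀ v, f v = ∅ → ∀ c : Fin k, ∃ u, G.Adj v u ∧ c ∈ f u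

/-- The `k`-rainbow domination number: the minimum weight of a `k`-rainbow
dominating function. -/
noncomputable def rainbowDomNum {V : Type*} [Fintype V] (G : SimpleGraph V) (k : ℕ) : ℕ :=
  sInf {w | ∃ f : V → Finset (Fin k), IsRainbowDominating G k f ∧ w = ∑ v, (f v).card}

/-! A vertex `v` with `f v = ∅` sees all `k` colours among its neighbours, so they carry weight at
least `k`; otherwise `k |f v| ≥ k`. Hence every vertex satisfies `k ≤ k |f v| + ∑_{u ~ v} |f u|`.
Summing over `v` counts each `|f u|` once for each of the `r` neighbours of `u`, which gives
`k |V| ≤ (r + k) w(f)`; apply this to a kRDF of minimum weight. -/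

namespace SimpleGraph

variable {V : Type*} [Fintype V] (G : SimpleGraph V) [DecidableRel G.Adj]

theorem sum_sum_neighborFinset {M : Type*} [AddCommMonoid M] (g : V → M) :
    ∑ v, ∑ u ∈ G.neighborFinset v, g u = ∑ u, G.degree u • g u := by
  rw [Finset.sum_comm' (t' := univ) (s' := fun u => G.neighborFinset u) (by simp [adj_comm])]
  simp only [sum_const, card_neighborFinset_eq_degree]

theorem IsRegularOfDegree.sum_sum_neighborFinset {r : ℕ} (hreg : G.IsRegularOfDegree r)
    {M : Type*} [AddCommMonoid M] (g : V → M) :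
    ∑ v, ∑ u ∈ G.neighborFinset v, g u = r • ∑ u, g u := by
  simp only [G.sum_sum_neighborFinset, hreg.degree_eq, smul_sum]

end SimpleGraph

section RainbowDomination

variable {V : Type*} (G : SimpleGraph V) (k : ℕ)

theorem isRainbowDominating_const_univ : IsRainbowDominating G k fun _ => univ :=
  fun _ hv c => absurd (hv ▸ mem_univ c) (notMem_empty c)

theorem exists_isRainbowDominating_rainbowDomNum_eq [Fintype V] :
    ∃ f : V → Finset (Fin k), IsRainbowDominating G k f ∧ rainbowDomNum G k = ∑ v, (f v).card :=
  Nat.sInf_mem (s := {w | ∃ f : V → Finset (Fin k), IsRainbowDominating G k f ∧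
    w = ∑ v, (f v).card}) ⟨_, fun _ => univ, isRainbowDominating_const_univ G k, rfl⟩

variable {G k} [Fintype V] [DecidableRel G.Adj] {f : V → Finset (Fin k)}

theorem IsRainbowDominating.le_mul_card_add_sum_neighborFinset (hf : IsRainbowDominating G k f)
    (v : V) : k ≤ k * (f v).card + ∑ u ∈ G.neighborFinset v, (f u).card := by
  rcases (f v).eq_empty_or_nonempty with hv | hv
  · have hcover : (univ : Finset (Fin k)) ⊆ (G.neighborFinset v).biUnion f := fun c _ => by
      obtain ⟨u, hadj, hc⟩ := hf v hv c
      exact mem_biUnion.2 ⟨u, (G.mem_neighborFinset v u).2 hadj, hc⟩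
    calc k = (univ : Finset (Fin k)).card := (card_fin k).symm
      _ ≤ ((G.neighborFinset v).biUnion f).card := card_le_card hcover
      _ ≤ ∑ u ∈ G.neighborFinset v, (f u).card := card_biUnion_le
      _ ≤ _ := Nat.le_add_left _ _
  · exact (Nat.le_mul_of_pos_right k hv.card_pos).trans (Nat.le_add_right _ _)

theorem IsRainbowDominating.mul_card_le {r : ℕ} (hreg : G.IsRegularOfDegree r)
    (hf : IsRainbowDominating G k f) :
    k * Fintype.card V ≤ (r + k) * ∑ v, (f v).card :=
  calc k * Fintype.card V = ∑ _ : V, k := by rw [sum_const, card_univ, smul_eq_mul, mul_comm]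
    _ ≤ ∑ v, (k * (f v).card + ∑ u ∈ G.neighborFinset v, (f u).card) :=
      sum_le_sum fun v _ => hf.le_mul_card_add_sum_neighborFinset v
    _ = (r + k) * ∑ v, (f v).card := by
      rw [sum_add_distrib, ← mul_sum, hreg.sum_sum_neighborFinset, smul_eq_mul]
      ring

end RainbowDomination

theorem rainbow_dom_regular_lower_bound_general {V : Type*} [Fintype V] (G : SimpleGraph V)
    [DecidableRel G.Adj] (r k : ℕ) (hreg : G.IsRegularOfDegree r) :
    ((k : ℚ) / ((r : ℚ) + k)) * Fintype.card V ≤ rainbowDomNum G k := by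
  obtain ⟨f, hf, hweight⟩ := exists_isRainbowDominating_rainbowDomNum_eq G k
  have hbound : (k * Fintype.card V : ℚ) ≤ rainbowDomNum G k * (r + k) := by
    rw [hweight, mul_comm _ ((r : ℚ) + k)]
    exact_mod_cast hf.mul_card_le hreg
  rw [div_mul_eq_mul_div]
  exact div_le_of_le_mul₀ (by positivity) (by positivity) hbound

theorem rainbow_dom_regular_lower_bound {V : Type*} [Fintype V] (G : SimpleGraph V)
    [DecidableRel G.Adj] (r k : ℕ) (hk : 1 ≤ k) (hreg : G.IsRegularOfDegree r) :
    ((k : ℚ) / ((r : ℚ) + k)) * Fintype.card V ≤ rainbowDomNum G k :=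
  rainbow_dom_regular_lower_bound_general G r k hreg
end

section
/- Let f be a 2-rainbow dominating function of C_m □ C_n of minimum weight (a γ_{r2}(C_m □ C_n)-function), and write m = 3k + ℓ with ℓ ≡ m (mod 3), ℓ ∈ {0,1,2}. For each column index i, let s_i = Σ_{x ∈ C^i} |f(x)| be the weight of f on the i-th column. Then for every i (indices taken modulo n), s_{i-1} + s_{i+1} ≥ 2m − 4·s_i = 6k + 2ℓ − 4·s_i. -/
/-!
At a vertex with empty label the four neighbours must carry both colours, so in every case
`2 ≤ 2 |f v| + Σ_{u ∼ v} |f u|`. Summing this over the `m` vertices of column `j` of the torus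
counts column `j` four times (twice directly, once through each vertical neighbour) and
columns `j - 1`, `j + 1` once each.
-/

open SimpleGraph Finset

lemma SimpleGraph.cycleGraph_adj_eq_sub_one_or_eq_add_one {m : ℕ} [NeZero m] {a b : Fin m}
    (h : (cycleGraph m).Adj a b) : b = a - 1 ∨ b = a + 1 := by
  have eq_one {x : Fin m} (hx : x.val = 1) : x = 1 :=
    Fin.ext (by rw [hx, Fin.val_one', Nat.mod_eq_of_lt (by omega)])
  rcases cycleGraph_adj'.mp h with h | h
  · left; rw [← eq_one h]; abel
  · right; rw [← eq_one h]; abel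

lemma IsRainbowDominating.le_mul_card_add_sum {V ι : Type*} [Fintype ι] {G : SimpleGraph V}
    {k : ℕ} {f : V → Finset (Fin k)} (hf : IsRainbowDominating G k f) (v : V) (g : ι → V)
    (hg : ∀ u, G.Adj v u → ∃ t, g t = u) :
    k ≤ k * (f v).card + ∑ t, (f (g t)).card := by
  by_cases hv : f v = ∅
  · have hcover : (univ : Finset (Fin k)) ⊆ univ.biUnion (fun t => f (g t)) := by
      intro c _
      obtain ⟨u, hvu, hc⟩ := hf v hv c
      obtain ⟨t, rfl⟩ := hg u hvu
      exact mem_biUnion.mpr ⟨t, mem_univ t, hc⟩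
    calc k = (univ : Finset (Fin k)).card := (card_fin k).symm
      _ ≤ ∑ t, (f (g t)).card := (card_le_card hcover).trans card_biUnion_le
      _ ≤ k * (f v).card + ∑ t, (f (g t)).card := Nat.le_add_left _ _
  · have : 0 < (f v).card := card_pos.mpr (nonempty_iff_ne_empty.mpr hv)
    exact (Nat.le_mul_of_pos_right k this).trans (Nat.le_add_right _ _)

section Torus

variable {m n : ℕ} [NeZero m] [NeZero n]

lemma cycleGraph_boxProd_adj_exists_fin_four {i : Fin m} {j : Fin n} {u : Fin m × Fin n}
    (h : (cycleGraph m □ cycleGraph n).Adj (i, j) u) :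
    ∃ t : Fin 4, ![(i - 1, j), (i + 1, j), (i, j - 1), (i, j + 1)] t = u := by
  obtain ⟨u₁, u₂⟩ := u
  rcases boxProd_adj.mp h with ⟨hi, rfl⟩ | ⟨hj, rfl⟩
  · rcases cycleGraph_adj_eq_sub_one_or_eq_add_one hi with rfl | rfl
    exacts [⟨0, rfl⟩, ⟨1, rfl⟩]
  · rcases cycleGraph_adj_eq_sub_one_or_eq_add_one hj with rfl | rfl
    exacts [⟨2, rfl⟩, ⟨3, rfl⟩]

lemma IsRainbowDominating.two_le_torus_local_weight {f : Fin m × Fin n → Finset (Fin 2)}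
    (hf : IsRainbowDominating (cycleGraph m □ cycleGraph n) 2 f) (i : Fin m) (j : Fin n) :
    2 ≤ 2 * (f (i, j)).card + (f (i - 1, j)).card + (f (i + 1, j)).card
      + (f (i, j - 1)).card + (f (i, j + 1)).card := by
  have := hf.le_mul_card_add_sum (i, j) _ fun _ => cycleGraph_boxProd_adj_exists_fin_four
  simpa only [Fin.sum_univ_four, Matrix.cons_val, add_assoc] using this

def columnWeight (f : Fin m × Fin n → Finset (Fin 2)) (j : Fin n) : ℕ :=
  ∑ i, (f (i, j)).card

lemma IsRainbowDominating.two_mul_le_columnWeight {f : Fin m × Fin n → Finset (Fin 2)}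
    (hf : IsRainbowDominating (cycleGraph m □ cycleGraph n) 2 f) (j : Fin n) :
    2 * m ≤ 4 * columnWeight f j + columnWeight f (j - 1) + columnWeight f (j + 1) := by
  have hsub : ∑ i, (f (i - 1, j)).card = columnWeight f j :=
    Fintype.sum_equiv (Equiv.subRight 1) _ _ fun _ => rfl
  have hadd : ∑ i, (f (i + 1, j)).card = columnWeight f j :=
    Fintype.sum_equiv (Equiv.addRight 1) _ _ fun _ => rfl
  have hsum := sum_le_sum fun i (_ : i ∈ univ) => hf.two_le_torus_local_weight i j
  simp only [sum_const, card_univ, Fintype.card_fin, smul_eq_mul, sum_add_distrib,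
    ← mul_sum, hsub, hadd] at hsum
  unfold columnWeight at hsum ⊢
  omega

end Torus

theorem column_weight_ineq_general (m n k ℓ : ℕ) [NeZero n] (hm : 3 ≤ m)
    (hkl : m = 3 * k + ℓ)
    (f : Fin m × Fin n → Finset (Fin 2))
    (hf : IsRainbowDominating (cycleGraph m □ cycleGraph n) 2 f)
    (s : Fin n → ℕ) (hs : ∀ j, s j = ∑ i : Fin m, (f (i, j)).card) (j : Fin n) :
    (s (j - 1) : ℤ) + s (j + 1) ≥ 2 * m - 4 * s j ∧
      (2 * (m : ℤ) - 4 * s j = 6 * k + 2 * ℓ - 4 * s j) := by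
  have : NeZero m := ⟨by omega⟩
  obtain rfl : s = columnWeight f := funext hs
  have key := hf.two_mul_le_columnWeight j
  constructor
  · omega
  · subst hkl; push_cast; ring

theorem column_weight_ineq (m n k ℓ : ℕ) [NeZero n] (hm : 3 ≤ m) (hn : 3 ≤ n)
    (hkl : m = 3 * k + ℓ) (hℓ : ℓ < 3)
    (f : Fin m × Fin n → Finset (Fin 2))
    (hf : IsRainbowDominating (cycleGraph m □ cycleGraph n) 2 f)
    (hmin : ∑ v, (f v).card = rainbowDomNum (cycleGraph m □ cycleGraph n) 2)
    (s : Fin n → ℕ) (hs : ∀ j, s j = ∑ i : Fin m, (f (i, j)).card) (j : Fin n) :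
    (s (j - 1) : ℤ) + s (j + 1) ≥ 2 * m - 4 * s j ∧
      (2 * (m : ℤ) - 4 * s j = 6 * k + 2 * ℓ - 4 * s j) :=
  column_weight_ineq_general m n k ℓ hm hkl f hf s hs j
end

section
/- Let m ≡ 2 (mod 3) with m = 3k + 2, m ≥ 5, and let n ≡ 0 (mod 6), n ≥ 6. Then γ_{r2}(C_m □ C_n) ≤ k·n + n. -/
/-!
Index `C_{3k+2} □ C_n` by pairs `(i, j)`. Label `(i, j)` with the single color `j mod 2` when
`i ≤ 3k` and `i + j ≡ 0 (mod 3)`, or when `i = 3k + 1` and `j ≢ 0 (mod 3)`; every column then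
carries `k + 1` labels. An unlabeled vertex has `i + j ≡ 1`, or `i + j ≡ 2` with `i ≤ 3k`, and in
either case a vertical neighbor (in the same column, so with its own color) and a horizontal
neighbor (in an adjacent column, so with the other color) are labeled. Since `6 ∣ n`, crossing the
seam between columns `n - 1` and `0` changes neither `i + j mod 3` nor the alternation of parities.
-/

open SimpleGraph Finset

lemma rainbowDomNum_le {V : Type*} [Fintype V] {G : SimpleGraph V} {k : ℕ}
    {f : V → Finset (Fin k)} (hf : IsRainbowDominating G k f) :
    rainbowDomNum G k ≤ ∑ v, (f v).card :=
  Nat.sInf_le ⟨f, hf, rfl⟩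

lemma cycleGraph_exists_adj_succ {q : ℕ} (hq : 2 ≤ q) (a : Fin q) :
    ∃ b, (cycleGraph q).Adj a b ∧ (b.val = a.val + 1 ∨ a.val + 1 = q ∧ b.val = 0) := by
  obtain ⟨p, rfl⟩ : ∃ p, q = p + 2 := ⟨q - 2, by omega⟩
  refine ⟨a + 1, cycleGraph_adj.mpr (Or.inr (add_sub_cancel_left a 1)), ?_⟩
  rw [Fin.val_add_one]
  split_ifs with h
  · exact Or.inr ⟨by simp [h], rfl⟩
  · exact Or.inl rfl

lemma cycleGraph_exists_adj_pred {q : ℕ} (hq : 2 ≤ q) (a : Fin q) :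
    ∃ b, (cycleGraph q).Adj a b ∧ (a.val = b.val + 1 ∨ b.val + 1 = q ∧ a.val = 0) := by
  obtain ⟨p, rfl⟩ : ∃ p, q = p + 2 := ⟨q - 2, by omega⟩
  refine ⟨a - 1, cycleGraph_adj.mpr (Or.inl (sub_sub_cancel a 1)), ?_⟩
  have hval := Fin.val_add_one (a - 1)
  rw [sub_add_cancel] at hval
  split_ifs at hval with h
  · exact Or.inr ⟨by simp [h], hval⟩
  · exact Or.inl hval

def InDiagonalPattern (k i j : ℕ) : Prop :=
  i ≤ 3 * k ∧ (i + j) % 3 = 0 ∨ i = 3 * k + 1 ∧ j % 3 ≠ 0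

instance (k i j : ℕ) : Decidable (InDiagonalPattern k i j) := by
  unfold InDiagonalPattern; infer_instance

lemma mod_three_of_not_inDiagonalPattern {k i j : ℕ} (hi : i < 3 * k + 2)
    (h : ¬InDiagonalPattern k i j) : (i + j) % 3 = 1 ∨ (i + j) % 3 = 2 ∧ i ≤ 3 * k := by
  simp only [InDiagonalPattern, not_or, not_and_or] at h
  omega

lemma exists_adj_row_inDiagonalPattern {k : ℕ} (i : Fin (3 * k + 2)) {j : ℕ}
    (h : ¬InDiagonalPattern k i j) :
    ∃ i', (cycleGraph (3 * k + 2)).Adj i i' ∧ InDiagonalPattern k i' j := by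
  unfold InDiagonalPattern
  rcases mod_three_of_not_inDiagonalPattern i.isLt h with hij | hij
  · obtain ⟨i', hadj, hi'⟩ := cycleGraph_exists_adj_pred (by omega) i
    exact ⟨i', hadj, by omega⟩
  · obtain ⟨i', hadj, hi'⟩ := cycleGraph_exists_adj_succ (by omega) i
    exact ⟨i', hadj, by omega⟩

lemma exists_adj_column_inDiagonalPattern {k n : ℕ} (hn : n % 6 = 0) {i : ℕ}
    (hi : i < 3 * k + 2) (j : Fin n) (h : ¬InDiagonalPattern k i j) :
    ∃ j', (cycleGraph n).Adj j j' ∧ InDiagonalPattern k i j' ∧ j'.val % 2 ≠ j.val % 2 := by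
  have hn2 : 2 ≤ n := by have := j.isLt; omega
  unfold InDiagonalPattern
  rcases mod_three_of_not_inDiagonalPattern hi h with hij | hij
  · obtain ⟨j', hadj, hj'⟩ := cycleGraph_exists_adj_pred hn2 j
    exact ⟨j', hadj, by omega⟩
  · obtain ⟨j', hadj, hj'⟩ := cycleGraph_exists_adj_succ hn2 j
    exact ⟨j', hadj, by omega⟩

def diagonalLabeling (k : ℕ) {m n : ℕ} (v : Fin m × Fin n) : Finset (Fin 2) :=
  if InDiagonalPattern k v.1 v.2 then {⟨v.2 % 2, Nat.mod_lt _ two_pos⟩} else ∅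

lemma mem_diagonalLabeling {k m n : ℕ} {i : Fin m} {j : Fin n} {c : Fin 2} :
    c ∈ diagonalLabeling k (i, j) ↔ InDiagonalPattern k i j ∧ c.val = j.val % 2 := by
  unfold diagonalLabeling
  split_ifs with h <;> simp [h, Fin.ext_iff]

lemma card_diagonalLabeling {k m n : ℕ} (v : Fin m × Fin n) :
    (diagonalLabeling k v).card = if InDiagonalPattern k v.1 v.2 then 1 else 0 := by
  unfold diagonalLabeling
  split_ifs <;> rfl

lemma isRainbowDominating_diagonalLabeling {k n : ℕ} (hn : n % 6 = 0) :
    IsRainbowDominating (cycleGraph (3 * k + 2) □ cycleGraph n) 2 (diagonalLabeling k) := by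
  rintro ⟨i, j⟩ hv c
  have h : ¬InDiagonalPattern k i j := fun h => by simp [diagonalLabeling, h] at hv
  by_cases hc : c.val = j.val % 2
  · obtain ⟨i', hadj, hi'⟩ := exists_adj_row_inDiagonalPattern i h
    exact ⟨(i', j), boxProd_adj_left.mpr hadj, mem_diagonalLabeling.mpr ⟨hi', hc⟩⟩
  · obtain ⟨j', hadj, hj', hpar⟩ := exists_adj_column_inDiagonalPattern hn i.isLt j h
    exact ⟨(i, j'), boxProd_adj_right.mpr hadj, mem_diagonalLabeling.mpr ⟨hj', by omega⟩⟩

lemma card_filter_inDiagonalPattern_le (k j : ℕ) :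
    #{i : Fin (3 * k + 2) | InDiagonalPattern k i j} ≤ k + 1 := by
  calc #{i : Fin (3 * k + 2) | InDiagonalPattern k i j} ≤ #(range (k + 1)) := by
        refine card_le_card_of_injOn (fun i => i.val / 3) ?_ ?_
        · intro i hi
          simp only [mem_coe, mem_filter, mem_univ, true_and] at hi
          unfold InDiagonalPattern at hi
          simp only [coe_range, Set.mem_Iio]
          omega
        · intro a ha b hb hab
          simp only [mem_coe, mem_filter, mem_univ, true_and] at ha hb
          unfold InDiagonalPattern at ha hb
          exact Fin.ext (by simp only at hab; omega)
    _ = k + 1 := card_range _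

lemma sum_card_diagonalLabeling_le (k n : ℕ) :
    ∑ v : Fin (3 * k + 2) × Fin n, (diagonalLabeling k v).card ≤ (k + 1) * n := by
  calc ∑ v : Fin (3 * k + 2) × Fin n, (diagonalLabeling k v).card
      = ∑ j : Fin n, #{i : Fin (3 * k + 2) | InDiagonalPattern k i j} := by
        rw [Fintype.sum_prod_type, sum_comm]
        simp only [card_diagonalLabeling, card_filter]
    _ ≤ ∑ _j : Fin n, (k + 1) := sum_le_sum fun j _ => card_filter_inDiagonalPattern_le k j
    _ = (k + 1) * n := by simp [mul_comm]

theorem two_rainbow_dom_cycles_upper_mod2_general (m n k : ℕ) (hmk : m = 3 * k + 2)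
    (hn6 : n % 6 = 0) :
    rainbowDomNum (cycleGraph m □ cycleGraph n) 2 ≤ k * n + n := by
  subst hmk
  calc rainbowDomNum (cycleGraph (3 * k + 2) □ cycleGraph n) 2
      ≤ ∑ v, (diagonalLabeling k v).card :=
        rainbowDomNum_le (isRainbowDominating_diagonalLabeling hn6)
    _ ≤ (k + 1) * n := sum_card_diagonalLabeling_le k n
    _ = k * n + n := by ring

theorem two_rainbow_dom_cycles_upper_mod2 (m n k : ℕ) (hm : 5 ≤ m) (hmk : m = 3 * k + 2)
    (hn : 6 ≤ n) (hn6 : n % 6 = 0) :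
    rainbowDomNum (cycleGraph m □ cycleGraph n) 2 ≤ k * n + n :=
  two_rainbow_dom_cycles_upper_mod2_general m n k hmk hn6
end

section
/- Let m ≥ 3 with m ≡ 0 (mod 3), and let n ≥ 6 with n ≡ b (mod 6) for b ∈ {1,2,3,5}. Then γ_{r2}(C_m □ C_n) ≤ (m/3)·(n+1). -/
/-!
Label column `k` of the grid with the colour `k mod 2` on the rows `i ≡ k (mod 3)`. An empty
vertex `(i, k)` then has a vertical neighbour in a row `≡ k`, carrying colour `k`, and, being
on row `k ± 1`, a horizontal neighbour in column `k ± 1` carrying the other colour. Since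
`3 ∣ m` the rows wrap around consistently; the columns `0, …, n` are wrapped onto `C_n` by
placing both columns `0` and `n` on column `0`, which costs `m / 3` per column, `(m / 3)(n + 1)`
in total. The only vertices left to check are the empty ones of column `0`: their vertical
neighbours see colours `0` and `n`, which suffices for odd `n`, and for `n ≡ 2 (mod 3)` such a
vertex lies on a row `≡ 1` and sees colour `1` in column `1`.
-/

open SimpleGraph Finset

open Fin.NatCast

theorem rainbowDomNum_le_sum_card {V : Type*} [Fintype V] {G : SimpleGraph V} {k : ℕ}
    {f : V → Finset (Fin k)} (hf : IsRainbowDominating G k f) :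
    rainbowDomNum G k ≤ ∑ v, #(f v) :=
  Nat.sInf_le ⟨f, hf, rfl⟩

theorem Fin.val_add_one_mod_of_dvd {n d : ℕ} [NeZero n] (hd : d ∣ n) (a : Fin n) :
    (a + 1).val % d = (a.val + 1) % d := by
  rw [Fin.val_add, Fin.val_one', Nat.mod_mod_of_dvd _ hd, Nat.add_mod,
    Nat.mod_mod_of_dvd _ hd, ← Nat.add_mod]

theorem Fin.two_eq_natCast_or_eq_natCast_succ (c : Fin 2) (k : ℕ) :
    c = k ∨ c = ((k + 1 : ℕ) : Fin 2) := by
  simp only [Fin.ext_iff, Fin.val_natCast]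
  omega

theorem cycleGraph_adj_add_one {n : ℕ} [NeZero n] (hn : 2 ≤ n) (i : Fin n) :
    (cycleGraph n).Adj i (i + 1) := by
  obtain ⟨n, rfl⟩ : ∃ n', n = n' + 2 := ⟨n - 2, by omega⟩
  exact cycleGraph_adj.mpr (Or.inr (add_sub_cancel_left i 1))

theorem cycleGraph_adj_sub_one {n : ℕ} [NeZero n] (hn : 2 ≤ n) (i : Fin n) :
    (cycleGraph n).Adj i (i - 1) := by
  simpa using (cycleGraph_adj_add_one hn (i - 1)).symm

theorem exists_cycleGraph_adj_val_mod_three {m : ℕ} (hm : 3 ∣ m) (i : Fin m) {r : ℕ}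
    (hr : i.val % 3 ≠ r % 3) : ∃ i', (cycleGraph m).Adj i i' ∧ i'.val % 3 = r % 3 := by
  have : NeZero m := ⟨i.pos.ne'⟩
  have hm2 : 2 ≤ m := le_trans (by norm_num) (Nat.le_of_dvd i.pos hm)
  have hsucc := Fin.val_add_one_mod_of_dvd hm i
  have hpred := Fin.val_add_one_mod_of_dvd hm (i - 1)
  rw [sub_add_cancel] at hpred
  by_cases h : (i.val + 1) % 3 = r % 3
  · exact ⟨i + 1, cycleGraph_adj_add_one hm2 i, by omega⟩
  · exact ⟨i - 1, cycleGraph_adj_sub_one hm2 i, by omega⟩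

def diagonalLabel (i k : ℕ) : Finset (Fin 2) :=
  if i % 3 = k % 3 then {(k : Fin 2)} else ∅

/-- Columns `0, …, n` of `diagonalLabel` wrapped onto `C_m □ C_n`, so that columns `0` and `n`
are superposed. -/
def wrappedLabel {m n : ℕ} [NeZero n] (v : Fin m × Fin n) : Finset (Fin 2) :=
  ((range (n + 1)).filter fun k : ℕ => (k : Fin n) = v.2).biUnion (diagonalLabel v.1.val)

theorem diagonalLabel_subset_wrappedLabel {m n : ℕ} [NeZero n] {k : ℕ} (hk : k ≤ n)
    {i : Fin m} {j : Fin n} (hkj : (k : Fin n) = j) :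
    diagonalLabel i k ⊆ wrappedLabel (i, j) :=
  subset_biUnion_of_mem _ (mem_filter.mpr ⟨mem_range.mpr (by omega), hkj⟩)

theorem sum_card_diagonalLabel {m : ℕ} (hm : 3 ∣ m) (k : ℕ) :
    ∑ i : Fin m, #(diagonalLabel i k) = m / 3 := by
  have hcard : ∀ i, #(diagonalLabel i k) = if i ≡ k [MOD 3] then 1 else 0 := by
    intro i
    unfold diagonalLabel Nat.ModEq
    split_ifs <;> simp [*]
  rw [Fin.sum_univ_eq_sum_range (fun i => #(diagonalLabel i k)),
    sum_congr rfl fun i _ => hcard i, sum_boole, ← Nat.count_eq_card_filter_range,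
    Nat.count_modEq_card m three_pos, Nat.mod_eq_zero_of_dvd hm]
  simp

theorem sum_card_wrappedLabel_le {m n : ℕ} [NeZero n] (hm : 3 ∣ m) :
    ∑ v : Fin m × Fin n, #(wrappedLabel v) ≤ m / 3 * (n + 1) :=
  calc ∑ v : Fin m × Fin n, #(wrappedLabel v)
      ≤ ∑ v : Fin m × Fin n, ∑ k ∈ (range (n + 1)).filter fun k : ℕ => (k : Fin n) = v.2,
          #(diagonalLabel v.1 k) := sum_le_sum fun _ _ => card_biUnion_le
    _ = ∑ i : Fin m, ∑ k ∈ range (n + 1), #(diagonalLabel i k) := by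
      rw [Fintype.sum_prod_type]
      refine sum_congr rfl fun i _ => ?_
      dsimp only
      rw [sum_fiberwise]
    _ = m / 3 * (n + 1) := by
      rw [sum_comm]
      simp [sum_card_diagonalLabel hm, mul_comm]

theorem exists_adj_mem_wrappedLabel_of_row {m n : ℕ} [NeZero n] (hm : 3 ∣ m) {i : Fin m}
    {j : Fin n} {k : ℕ} (hk : k ≤ n) (hkj : (k : Fin n) = j) (hik : i.val % 3 ≠ k % 3) :
    ∃ u, (cycleGraph m □ cycleGraph n).Adj (i, j) u ∧ (k : Fin 2) ∈ wrappedLabel u := by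
  obtain ⟨i', hadj, hi'⟩ := exists_cycleGraph_adj_val_mod_three hm i hik
  refine ⟨(i', j), boxProd_adj.mpr (Or.inl ⟨hadj, rfl⟩),
    diagonalLabel_subset_wrappedLabel hk hkj ?_⟩
  simp [diagonalLabel, hi']

theorem exists_adj_mem_wrappedLabel_of_succ {m n : ℕ} [NeZero n] (hn : 2 ≤ n) {i : Fin m}
    {j : Fin n} {k : ℕ} (hk : k < n) (hkj : (k : Fin n) = j) (hik : i.val % 3 = (k + 1) % 3) :
    ∃ u, (cycleGraph m □ cycleGraph n).Adj (i, j) u ∧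
      ((k + 1 : ℕ) : Fin 2) ∈ wrappedLabel u := by
  refine ⟨(i, j + 1), boxProd_adj.mpr (Or.inr ⟨cycleGraph_adj_add_one hn j, rfl⟩),
    diagonalLabel_subset_wrappedLabel hk (by simp [hkj]) ?_⟩
  simp [diagonalLabel, hik]

theorem exists_adj_mem_wrappedLabel_of_pred {m n : ℕ} [NeZero n] (hn : 2 ≤ n) {i : Fin m}
    {j : Fin n} {k : ℕ} (hk : k + 1 ≤ n) (hkj : ((k + 1 : ℕ) : Fin n) = j)
    (hik : i.val % 3 = k % 3) :
    ∃ u, (cycleGraph m □ cycleGraph n).Adj (i, j) u ∧ (k : Fin 2) ∈ wrappedLabel u := by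
  refine ⟨(i, j - 1), boxProd_adj.mpr (Or.inr ⟨cycleGraph_adj_sub_one hn j, rfl⟩),
    diagonalLabel_subset_wrappedLabel (k := k) (by omega)
      (eq_sub_of_add_eq (by simp [← hkj])) ?_⟩
  simp [diagonalLabel, hik]

theorem isRainbowDominating_wrappedLabel {m n : ℕ} [NeZero n] (hm : 3 ∣ m) (hn : 2 ≤ n)
    (hn' : Odd n ∨ n % 3 = 2) :
    IsRainbowDominating (cycleGraph m □ cycleGraph n) 2 wrappedLabel := by
  rintro ⟨i, j⟩ hempty c
  have hoff : ∀ k ≤ n, (k : Fin n) = j → i.val % 3 ≠ k % 3 := fun k hk hkj hik => by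
    simpa [hempty, diagonalLabel, hik] using diagonalLabel_subset_wrappedLabel hk hkj (i := i)
  have hj : (j.val : Fin n) = j := Fin.cast_val_eq_self j
  have hij := hoff j j.is_le' hj
  rcases Fin.two_eq_natCast_or_eq_natCast_succ c j with rfl | rfl
  · exact exists_adj_mem_wrappedLabel_of_row hm j.is_le' hj hij
  rcases Nat.eq_zero_or_pos j.val with hj0 | hj0
  · have hnj : (n : Fin n) = j := by rw [Fin.natCast_self]; exact (Fin.ext hj0).symm
    have hin := hoff n le_rfl hnj
    rcases hn' with hodd | hn3
    · have hcol : ((j.val + 1 : ℕ) : Fin 2) = (n : Fin 2) := by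
        rw [Nat.odd_iff] at hodd
        simp only [Fin.ext_iff, Fin.val_natCast]
        omega
      exact hcol ▸ exists_adj_mem_wrappedLabel_of_row hm le_rfl hnj hin
    · exact exists_adj_mem_wrappedLabel_of_succ hn j.isLt hj (by omega)
  · by_cases hsucc : i.val % 3 = (j.val + 1) % 3
    · exact exists_adj_mem_wrappedLabel_of_succ hn j.isLt hj hsucc
    · obtain ⟨k, hk⟩ : ∃ k, j.val = k + 1 := ⟨j.val - 1, by omega⟩
      have hcol : ((j.val + 1 : ℕ) : Fin 2) = (k : Fin 2) := by
        simp only [Fin.ext_iff, Fin.val_natCast]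
        omega
      exact hcol ▸ exists_adj_mem_wrappedLabel_of_pred hn (by omega) (by rw [← hk, hj]) (by omega)

theorem two_rainbow_dom_cycles_upper_b1235_general (m n : ℕ) (hm3 : m % 3 = 0)
    (hn : 6 ≤ n) (hb : n % 6 = 1 ∨ n % 6 = 2 ∨ n % 6 = 3 ∨ n % 6 = 5) :
    rainbowDomNum (cycleGraph m □ cycleGraph n) 2 ≤ (m / 3) * (n + 1) := by
  have : NeZero n := ⟨by omega⟩
  have hm : 3 ∣ m := Nat.dvd_of_mod_eq_zero hm3
  have hn' : Odd n ∨ n % 3 = 2 := by rw [Nat.odd_iff]; omega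
  calc rainbowDomNum (cycleGraph m □ cycleGraph n) 2
      ≤ ∑ v, #(wrappedLabel v) :=
        rainbowDomNum_le_sum_card (isRainbowDominating_wrappedLabel hm (by omega) hn')
    _ ≤ m / 3 * (n + 1) := sum_card_wrappedLabel_le hm

theorem two_rainbow_dom_cycles_upper_b1235 (m n : ℕ) (hm : 3 ≤ m) (hm3 : m % 3 = 0)
    (hn : 6 ≤ n) (hb : n % 6 = 1 ∨ n % 6 = 2 ∨ n % 6 = 3 ∨ n % 6 = 5) :
    rainbowDomNum (cycleGraph m □ cycleGraph n) 2 ≤ (m / 3) * (n + 1) :=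
  two_rainbow_dom_cycles_upper_b1235_general m n hm3 hn hb
end
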